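/- Suppose the Laurent polynomial f = ∑_{i=−m}^{n} a_i X^i over L satisfies the annulus integrality conditions, that a_n ≠ 0 and a_{−m} ≠ 0, and that f has no root z ∈ L with |π| < |z| < 1. Then the ordinary polynomial P(X) = X^m · f(X) ∈ L[X] has degree m + n and P(0) ≠ 0, and among the m + n roots of P in L counted with multiplicity, exactly n satisfy |z| ≥ 1 and exactly m satisfy |z| ≤ |π|. -/

import Mathlib

/-!
Compare the Gauss norms `‖P‖_r = max_k |p_k| r ^ k` at `r = 1` and `r = |π|`. Over the
algebraically closed field `L` we have `P = a_n ∏ (X - z)`, and for a nonarchimedean absolute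
value the Gauss norm is multiplicative with `‖X - z‖_r = max r |z|`. As no root lies in the open
annulus `|π| < |z| < 1`, this gives `‖P‖_{|π|} = ‖P‖_1 · |π| ^ β`, where `β` counts the roots with
`|z| ≤ |π|`. The integrality conditions say exactly that `‖P‖_1 = 1` and `‖P‖_{|π|} = |π| ^ m`,
so `β = m`, and the other `n` roots satisfy `|z| ≥ 1`.
-/

open Polynomial

namespace Multiset

variable {α : Type*} (f : α → ℝ) {r : ℝ}

theorem prod_map_max_eq_pow_mul {c : ℝ} (s : Multiset α) (hgap : ∀ z ∈ s, f z ≤ r ∨ 1 ≤ f z)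
    (hrc : r ≤ c) (hc1 : c ≤ 1) :
    (s.map fun z => max c (f z)).prod =
      c ^ card (s.filter (f · ≤ r)) * ((s.filter fun z => ¬f z ≤ r).map f).prod := by
  conv_lhs => rw [← filter_add_not (fun z => f z ≤ r) s]
  rw [map_add, prod_add]
  congr 1
  · rw [map_congr rfl fun z hz => max_eq_left ((mem_filter.1 hz).2.trans hrc), map_const',
      prod_replicate]
  · refine congrArg _ (map_congr rfl fun z hz => max_eq_right ?_)
    obtain ⟨hzs, hzr⟩ := mem_filter.1 hz
    exact hc1.trans ((hgap z hzs).resolve_left hzr)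

theorem card_filter_one_le_add_card_filter_le (s : Multiset α)
    (hgap : ∀ z ∈ s, f z ≤ r ∨ 1 ≤ f z) (hr1 : r < 1) :
    card (s.filter (1 ≤ f ·)) + card (s.filter (f · ≤ r)) = card s := by
  have hbig : s.filter (1 ≤ f ·) = s.filter fun z => ¬f z ≤ r :=
    filter_congr fun z hz => ⟨fun h1 hr => (h1.trans hr).not_gt hr1, (hgap z hz).resolve_left⟩
  rw [hbig, add_comm, ← card_add, filter_add_not]

end Multiset

namespace Polynomial

theorem gaussNorm_eq_of_forall_le {F R : Type*} [Semiring R] [FunLike F R ℝ]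
    [ZeroHomClass F R ℝ] [NonnegHomClass F R ℝ] {v : F} {c B : ℝ} {p : R[X]} (hc : 0 ≤ c)
    (hle : ∀ i, v (p.coeff i) * c ^ i ≤ B) (heq : ∃ i, v (p.coeff i) * c ^ i = B) :
    p.gaussNorm v c = B := by
  obtain ⟨i, rfl⟩ := heq
  obtain ⟨j, hj⟩ := p.exists_eq_gaussNorm v c
  exact le_antisymm (hj ▸ hle j) (p.le_gaussNorm v hc i)

section Nonarchimedean

variable {K : Type*} [Field K] {v : AbsoluteValue K ℝ} (hna : IsNonarchimedean v) {c : ℝ}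
include hna

theorem gaussNorm_X_sub_C (hc : 0 ≤ c) (z : K) : (X - C z).gaussNorm v c = max c (v z) := by
  have h1 := (X - C z).le_gaussNorm v hc 1
  have h0 := (X - C z).le_gaussNorm v hc 0
  simp only [coeff_sub, coeff_X_one, coeff_C_succ, coeff_X_zero, coeff_C_zero, sub_zero,
    zero_sub, map_one, map_neg_eq_map, pow_one, pow_zero, one_mul, mul_one] at h1 h0
  refine le_antisymm ?_ (max_le h1 h0)
  calc (X - C z).gaussNorm v c ≤ max (X.gaussNorm v c) ((-C z).gaussNorm v c) := by
        rw [sub_eq_add_neg]; exact isNonarchimedean_gaussNorm v hna hc _ _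
    _ = max c (v z) := by
        rw [← monomial_one_one_eq_X, ← C_neg, gaussNorm_monomial, gaussNorm_C]; simp

theorem gaussNorm_multiset_prod (hc : 0 < c) (s : Multiset K[X]) :
    s.prod.gaussNorm v c = (s.map (gaussNorm v c)).prod := by
  induction s using Multiset.induction with
  | empty => simpa using gaussNorm_C v c (1 : K)
  | cons p s ih =>
    rw [Multiset.prod_cons, gaussNorm_mul hna hc, ih, Multiset.map_cons, Multiset.prod_cons]

theorem Splits.gaussNorm_eq {p : K[X]} (hp : p.Splits) (hc : 0 < c) :
    p.gaussNorm v c = v p.leadingCoeff * (p.roots.map fun z => max c (v z)).prod := by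
  conv_lhs => rw [hp.eq_prod_roots]
  rw [gaussNorm_mul hna hc, gaussNorm_C, gaussNorm_multiset_prod hna hc, Multiset.map_map]
  simp only [Function.comp_def, gaussNorm_X_sub_C hna hc.le]

theorem Splits.gaussNorm_eq_gaussNorm_one_mul_pow {p : K[X]} {r : ℝ} (hp : p.Splits)
    (hr0 : 0 < r) (hr1 : r ≤ 1) (hgap : ∀ z ∈ p.roots, v z ≤ r ∨ 1 ≤ v z) :
    p.gaussNorm v r = p.gaussNorm v 1 * r ^ Multiset.card (p.roots.filter (v · ≤ r)) := by
  rw [hp.gaussNorm_eq hna hr0, hp.gaussNorm_eq hna one_pos,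
    Multiset.prod_map_max_eq_pow_mul _ _ hgap le_rfl hr1,
    Multiset.prod_map_max_eq_pow_mul _ _ hgap hr1 le_rfl, one_pow, one_mul]
  ring

end Nonarchimedean

section Laurent

variable {R : Type*} [Semiring R]

/-- `X ^ m * ∑_{i = -m}^{n} a i * X ^ i`. -/
noncomputable def shiftedLaurent (m n : ℕ) (a : ℤ → R) : R[X] :=
  ∑ j ∈ Finset.range (m + n + 1), C (a ((j : ℤ) - m)) * X ^ j

variable {m n : ℕ} {a : ℤ → R}

theorem coeff_shiftedLaurent (k : ℕ) :
    (shiftedLaurent m n a).coeff k = if k ≤ m + n then a ((k : ℤ) - m) else 0 := by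
  simp only [shiftedLaurent, finsetSum_coeff, coeff_C_mul_X_pow]
  rw [Finset.sum_ite_eq]
  simp only [Finset.mem_range, Nat.lt_succ_iff]

theorem natDegree_shiftedLaurent (han : a n ≠ 0) : (shiftedLaurent m n a).natDegree = m + n := by
  refine natDegree_eq_of_le_of_coeff_ne_zero ?_ ?_
  · exact natDegree_le_iff_coeff_eq_zero.2 fun k hk => by
      rw [coeff_shiftedLaurent, if_neg (by omega)]
  · rwa [coeff_shiftedLaurent, if_pos le_rfl, Nat.cast_add, add_sub_cancel_left]

theorem eval_zero_shiftedLaurent : (shiftedLaurent m n a).eval 0 = a (-m) := by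
  rw [← coeff_zero_eq_eval_zero, coeff_shiftedLaurent, if_pos (Nat.zero_le _), Nat.cast_zero,
    zero_sub]

theorem gaussNorm_shiftedLaurent_eq_pow {v : AbsoluteValue R ℝ} {r : ℝ} (hr : 0 < r)
    (hle : ∀ i : ℤ, -(m : ℤ) ≤ i → i ≤ n → v (a i) ≤ r ^ (-i))
    (heq : ∃ i : ℤ, -(m : ℤ) ≤ i ∧ i ≤ n ∧ v (a i) = r ^ (-i)) :
    (shiftedLaurent m n a).gaussNorm v r = r ^ m := by
  have hpow : ∀ k : ℕ, r ^ (-((k : ℤ) - m)) * r ^ k = r ^ m := fun k => by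
    rw [← zpow_natCast, ← zpow_add₀ hr.ne', ← zpow_natCast]
    congr 1
    ring
  refine gaussNorm_eq_of_forall_le hr.le (fun k => ?_) ?_
  · rw [coeff_shiftedLaurent]
    split_ifs with hk
    · rw [← hpow k]
      gcongr
      exact hle _ (by omega) (by omega)
    · simp only [map_zero, zero_mul]
      positivity
  · obtain ⟨i, him, hin, hi⟩ := heq
    refine ⟨(i + m).toNat, ?_⟩
    have hk : (((i + m).toNat : ℕ) : ℤ) - m = i := by omega
    rw [coeff_shiftedLaurent, if_pos (by omega), hk, hi, ← hpow, hk]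

end Laurent

theorem eval_shiftedLaurent {K : Type*} [Field K] {m n : ℕ} {a : ℤ → K} {z : K} (hz : z ≠ 0) :
    (shiftedLaurent m n a).eval z = z ^ m * ∑ i ∈ Finset.Icc (-(m : ℤ)) n, a i * z ^ i := by
  rw [shiftedLaurent, eval_finsetSum, Finset.mul_sum]
  refine Finset.sum_nbij' (fun j => (j : ℤ) - m) (fun i => (i + m).toNat) ?_ ?_ ?_ ?_ ?_
  · intro j hj; simp only [Finset.mem_range, Finset.mem_Icc] at hj ⊢; omega
  · intro i hi; simp only [Finset.mem_range, Finset.mem_Icc] at hi ⊢; omega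
  · intro j _; simp
  · intro i hi; simp only [Finset.mem_Icc] at hi ⊢; omega
  · intro j _
    rw [eval_C_mul, eval_X_pow, mul_left_comm, ← zpow_natCast z m, ← zpow_add₀ hz, add_sub_cancel,
      zpow_natCast]

end Polynomial

open scoped Classical

theorem vologodsky_stmt_1_general
    {L : Type*} [Field L] [IsAlgClosed L]
    (v : AbsoluteValue L ℝ)
    (hna : ∀ x y : L, v (x + y) ≤ max (v x) (v y))
    (π : L) (hπ0 : 0 < v π) (hπ1 : v π < 1)
    (m n : ℕ) (a : ℤ → L)
    (h_i : ∀ i : ℤ, -(m : ℤ) ≤ i → i ≤ (n : ℤ) → v (a i) ≤ min 1 (v π ^ (-i)))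
    (h_ii : ∃ i : ℤ, 0 ≤ i ∧ i ≤ (n : ℤ) ∧ v (a i) = 1)
    (h_iii : ∃ i : ℤ, -(m : ℤ) ≤ i ∧ i ≤ 0 ∧ v (a i) = v π ^ (-i))
    (han : a (n : ℤ) ≠ 0) (ham : a (-(m : ℤ)) ≠ 0)
    (hroot : ∀ z : L, z ≠ 0 →
      (∑ i ∈ Finset.Icc (-(m : ℤ)) (n : ℤ), a i * z ^ i) = 0 →
      ¬ (v π < v z ∧ v z < 1))
    (P : Polynomial L)
    (hP : P = ∑ j ∈ Finset.range (m + n + 1),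
      Polynomial.C (a ((j : ℤ) - (m : ℤ))) * Polynomial.X ^ j) :
    P.natDegree = m + n ∧ P.eval 0 ≠ 0 ∧
      Multiset.card P.roots = m + n ∧
      Multiset.card (P.roots.filter fun z => 1 ≤ v z) = n ∧
      Multiset.card (P.roots.filter fun z => v z ≤ v π) = m := by
  obtain rfl : P = shiftedLaurent m n a := hP
  have hdeg := natDegree_shiftedLaurent (m := m) han
  have heval0 : (shiftedLaurent m n a).eval 0 ≠ 0 := by rwa [eval_zero_shiftedLaurent]
  have hsplits := IsAlgClosed.splits (shiftedLaurent m n a)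
  have hgap : ∀ z ∈ (shiftedLaurent m n a).roots, v z ≤ v π ∨ 1 ≤ v z := by
    intro z hz
    have hzroot := (mem_roots'.1 hz).2
    have hz0 : z ≠ 0 := by rintro rfl; exact heval0 hzroot
    rw [IsRoot, eval_shiftedLaurent hz0] at hzroot
    by_contra! hmid
    exact hroot z hz0 ((mul_eq_zero.1 hzroot).resolve_left (pow_ne_zero _ hz0)) hmid
  have hone : (shiftedLaurent m n a).gaussNorm v 1 = 1 := by
    simpa using gaussNorm_shiftedLaurent_eq_pow (v := v) one_pos
      (fun i him hin => by simpa using (h_i i him hin).trans (min_le_left _ _))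
      (by obtain ⟨i, hi0, hin, hi⟩ := h_ii; exact ⟨i, by omega, hin, by simpa using hi⟩)
  have hπ : (shiftedLaurent m n a).gaussNorm v (v π) = v π ^ m :=
    gaussNorm_shiftedLaurent_eq_pow hπ0 (fun i him hin => (h_i i him hin).trans (min_le_right _ _))
      (by obtain ⟨i, him, hi0, hi⟩ := h_iii; exact ⟨i, him, by omega, hi⟩)
  have hsmall : Multiset.card ((shiftedLaurent m n a).roots.filter (v · ≤ v π)) = m := by
    have h := hsplits.gaussNorm_eq_gaussNorm_one_mul_pow hna hπ0 hπ1.le hgap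
    rw [hπ, hone, one_mul] at h
    exact ((pow_right_inj₀ hπ0 hπ1.ne).1 h).symm
  have hcard : Multiset.card (shiftedLaurent m n a).roots = m + n := by
    rw [← hsplits.natDegree_eq_card_roots, hdeg]
  have hbig := Multiset.card_filter_one_le_add_card_filter_le v _ hgap hπ1
  exact ⟨hdeg, heval0, hcard, by omega, hsmall⟩

/-- With `L`, `v`, `π` and the annulus integrality conditions as in Statement 0,
assume moreover `a_n ≠ 0` and `a_{-m} ≠ 0` and that `f` has no root `z` with
`|π| < |z| < 1`.  Then the ordinary polynomial `P(X) = X^m · f(X)` has degree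
`m + n`, `P(0) ≠ 0`, and among its `m + n` roots in `L` counted with
multiplicity exactly `n` satisfy `|z| ≥ 1` and exactly `m` satisfy `|z| ≤ |π|`. -/
theorem vologodsky_stmt_1
    {L : Type*} [Field L] [IsAlgClosed L]
    (v : AbsoluteValue L ℝ)
    (hna : ∀ x y : L, v (x + y) ≤ max (v x) (v y))
    (π : L) (hπ0 : 0 < v π) (hπ1 : v π < 1)
    (m n : ℕ) (a : ℤ → L)
    (hsupp : ∀ i : ℤ, (i < -(m : ℤ) ∨ (n : ℤ) < i) → a i = 0)
    (h_i : ∀ i : ℤ, -(m : ℤ) ≤ i → i ≤ (n : ℤ) → v (a i) ≤ min 1 (v π ^ (-i)))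
    (h_ii : ∃ i : ℤ, 0 ≤ i ∧ i ≤ (n : ℤ) ∧ v (a i) = 1)
    (h_iii : ∃ i : ℤ, -(m : ℤ) ≤ i ∧ i ≤ 0 ∧ v (a i) = v π ^ (-i))
    (han : a (n : ℤ) ≠ 0) (ham : a (-(m : ℤ)) ≠ 0)
    (hroot : ∀ z : L, z ≠ 0 →
      (∑ i ∈ Finset.Icc (-(m : ℤ)) (n : ℤ), a i * z ^ i) = 0 →
      ¬ (v π < v z ∧ v z < 1))
    (P : Polynomial L)
    (hP : P = ∑ j ∈ Finset.range (m + n + 1),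
      Polynomial.C (a ((j : ℤ) - (m : ℤ))) * Polynomial.X ^ j) :
    P.natDegree = m + n ∧ P.eval 0 ≠ 0 ∧
      Multiset.card P.roots = m + n ∧
      Multiset.card (P.roots.filter fun z => 1 ≤ v z) = n ∧
      Multiset.card (P.roots.filter fun z => v z ≤ v π) = m :=
  vologodsky_stmt_1_general v hna π hπ0 hπ1 m n a h_i h_ii h_iii han ham hroot P hP
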